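/- Let F = F_{4^d}, d ≥ 2 (characteristic 2), with 4^d ≡ 1 mod 3. There exist x, y ∈ F, not both zero, with (x + y + xy)(x + y) + xy = 0; moreover for any such solution with x, y, x+y nonzero, setting z = x + y one has x + y + z = 0 and x^{−2} + y^{−2} + z^{−2} = 1. -/

import Mathlib

/-!
In characteristic 2 the cubic `(x + y + x y)(x + y) + x y = 0` is nodal at the origin, and the
line `y = t x` meets it once more, at `x = (t² + t + 1)/(t² + t)`; this point is defined and
nonzero as soon as `t ∉ 𝔽₄`, i.e. `t⁴ ≠ t`, and such `t` exists because `F` has more than four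
elements. Dividing the cubic by `x y (x + y)` gives `1/x + 1/y + 1/(x + y) = 1`, and squaring
(additive in characteristic 2) gives the second claim.
-/

open Polynomial

theorem FiniteField.exists_pow_ne_self_of_lt_card {K : Type*} [Field K] [Fintype K] {n : ℕ}
    (hn : 1 < n) (hcard : n < Fintype.card K) : ∃ t : K, t ^ n ≠ t := by
  classical
  by_contra! h
  have hroots := card_le_degree_of_subset_roots (p := (X ^ n - X : K[X])) (Z := Finset.univ)
    fun t _ => by simp [mem_roots (X_pow_card_sub_X_ne_zero K hn), h t]
  rw [X_pow_card_sub_X_natDegree_eq K hn, Finset.card_univ] at hroots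
  omega

section CharTwo

variable {F : Type*} [Field F] [CharP F 2]

def nodalCubic (x y : F) : F := (x + y + x * y) * (x + y) + x * y

theorem nodalCubic_eq_zero_of_pow_four_ne_self {t : F} (ht : t ^ 4 ≠ t) :
    (t ^ 2 + t + 1) / (t ^ 2 + t) ≠ 0 ∧
      nodalCubic ((t ^ 2 + t + 1) / (t ^ 2 + t)) (t * ((t ^ 2 + t + 1) / (t ^ 2 + t))) = 0 := by
  have h2 : (2 : F) = 0 := CharTwo.two_eq_zero
  have hfactor : t * (t + 1) * (t ^ 2 + t + 1) ≠ 0 := fun h =>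
    ht (by linear_combination h - (t ^ 3 + t ^ 2 + t) * h2)
  have hnum : t ^ 2 + t + 1 ≠ 0 := right_ne_zero_of_mul hfactor
  have hden : t ^ 2 + t ≠ 0 := by
    rw [show t ^ 2 + t = t * (t + 1) by ring]
    exact left_ne_zero_of_mul hfactor
  have hx : (t ^ 2 + t + 1) / (t ^ 2 + t) * (t ^ 2 + t) = t ^ 2 + t + 1 := div_mul_cancel₀ _ hden
  refine ⟨div_ne_zero hnum hden, ?_⟩
  set x := (t ^ 2 + t + 1) / (t ^ 2 + t)
  unfold nodalCubic
  linear_combination x ^ 2 * hx + x ^ 2 * (t + 1) ^ 2 * h2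

theorem inv_add_inv_add_inv_add_eq_one_of_nodalCubic_eq_zero {x y : F} (hx : x ≠ 0)
    (hy : y ≠ 0) (hxy : x + y ≠ 0) (h : nodalCubic x y = 0) :
    x⁻¹ + y⁻¹ + (x + y)⁻¹ = 1 := by
  unfold nodalCubic at h
  field_simp
  linear_combination h - (x ^ 2 * y + x * y ^ 2) * CharTwo.two_eq_zero (R := F)

theorem inv_sq_add_inv_sq_add_inv_sq_eq_one_of_nodalCubic_eq_zero {x y : F} (hx : x ≠ 0)
    (hy : y ≠ 0) (hxy : x + y ≠ 0) (h : nodalCubic x y = 0) :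
    x⁻¹ ^ 2 + y⁻¹ ^ 2 + (x + y)⁻¹ ^ 2 = 1 := by
  rw [← CharTwo.add_sq, ← CharTwo.add_sq,
    inv_add_inv_add_inv_add_eq_one_of_nodalCubic_eq_zero hx hy hxy h, one_pow]

end CharTwo

theorem stmt14_general (d : ℕ) (hd : 2 ≤ d) (F : Type) [Field F] [Fintype F]
    (hcard : Fintype.card F = 4 ^ d) :
    (∃ x y : F, (x, y) ≠ (0, 0) ∧ (x + y + x * y) * (x + y) + x * y = 0) ∧
    ∀ x y : F, x ≠ 0 → y ≠ 0 → x + y ≠ 0 →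
      (x + y + x * y) * (x + y) + x * y = 0 →
      x + y + (x + y) = 0 ∧ x⁻¹ ^ 2 + y⁻¹ ^ 2 + (x + y)⁻¹ ^ 2 = 1 := by
  have : CharP F 2 := charP_of_card_eq_prime_pow (f := 2 * d) (by rw [hcard, pow_mul]; norm_num)
  have hcard_gt : 4 < Fintype.card F :=
    hcard ▸ (show 4 < 4 ^ 2 by norm_num).trans_le (Nat.pow_le_pow_right (by norm_num) hd)
  obtain ⟨t, ht⟩ := FiniteField.exists_pow_ne_self_of_lt_card (by norm_num) hcard_gt
  obtain ⟨hx, hcubic⟩ := nodalCubic_eq_zero_of_pow_four_ne_self ht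
  refine ⟨⟨_, _, fun h => hx (Prod.ext_iff.mp h).1, hcubic⟩, fun x y hx hy hxy h => ?_⟩
  exact ⟨CharTwo.add_self_eq_zero _,
    inv_sq_add_inv_sq_add_inv_sq_eq_one_of_nodalCubic_eq_zero hx hy hxy h⟩

/-- covering the point P(0,1) in the completeness proof for V₁ in
PG(2d−1,4): existence of a nontrivial solution of (x+y+xy)(x+y)+xy = 0, and the
induced relations for z = x + y. -/
theorem stmt14 (d : ℕ) (hd : 2 ≤ d) (F : Type) [Field F] [Fintype F]
    (hcard : Fintype.card F = 4 ^ d) (hmod : 4 ^ d % 3 = 1) :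
    (∃ x y : F, (x, y) ≠ (0, 0) ∧ (x + y + x * y) * (x + y) + x * y = 0) ∧
    ∀ x y : F, x ≠ 0 → y ≠ 0 → x + y ≠ 0 →
      (x + y + x * y) * (x + y) + x * y = 0 →
      x + y + (x + y) = 0 ∧ x⁻¹ ^ 2 + y⁻¹ ^ 2 + (x + y)⁻¹ ^ 2 = 1 :=
  stmt14_general d hd F hcard
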